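/- arXiv:2210.00991 — 3 statements merged into one kernel-verified Lean document; each statement's English description precedes it below -/
import Mathlib

section
/- (Gradient of the occupancy measure) For a policy π_θ differentiably parameterized by θ ∈ ℝ^d, the gradient of the occupancy measure satisfies ∇_θ μ^{π_θ}(s,a) = Σ_{s',a'} μ^{π_θ}(s') β^{π_θ}(s',a',s,a) ∇_θ π_θ(a'|s'), where μ^{π_θ}(s') = Σ_a μ^{π_θ}(s',a) and β^{π_θ}(s',a',s,a) = Σ_k γ^k P(s_k=s,a_k=a | s_0=s',a_0=a'). -/
open scoped BigOperators

noncomputable section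

/-- `betaK P pol k s a s' a'` is the probability of being at state-action `(s',a')`
after exactly `k` steps starting from `(s,a)` under policy `pol`. -/
def betaK {S A : Type*} [Fintype S] [Fintype A] [DecidableEq S] [DecidableEq A]
    (P : S → A → S → ℝ) (pol : S → A → ℝ) : ℕ → S → A → S → A → ℝ
  | 0 => fun s a s' a' => if s = s' ∧ a = a' then 1 else 0
  | k + 1 => fun s a s' a' =>
      ∑ s'', ∑ a'', P s a s'' * pol s'' a'' * betaK P pol k s'' a'' s' a'

/-- Discounted transition kernel `β^π(s,a,s',a') = ∑_k γ^k β^π_k(s,a,s',a')`. -/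
def betaDisc {S A : Type*} [Fintype S] [Fintype A] [DecidableEq S] [DecidableEq A]
    (P : S → A → S → ℝ) (pol : S → A → ℝ) (γ : ℝ) (s : S) (a : A) (s' : S) (a' : A) : ℝ :=
  ∑' k : ℕ, γ ^ k * betaK P pol k s a s' a'

/-- Q-value function `Q^π_R(s,a) = ∑_n γ^n E[R(s_n,a_n) | s_0=s, a_0=a]`. -/
def Qval {S A : Type*} [Fintype S] [Fintype A] [DecidableEq S] [DecidableEq A]
    (P : S → A → S → ℝ) (pol : S → A → ℝ) (γ : ℝ) (R : S → A → ℝ) (s : S) (a : A) : ℝ :=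
  ∑' n : ℕ, γ ^ n * ∑ s', ∑ a', betaK P pol n s a s' a' * R s' a'

def stepDist {S A : Type*} [Fintype S] [Fintype A]
    (P : S → A → S → ℝ) (pol : S → A → ℝ) (q : S → ℝ) : ℕ → S → A → ℝ
  | 0 => fun s a => q s * pol s a
  | n + 1 => fun s' a' => (∑ s, ∑ a, stepDist P pol q n s a * P s a s') * pol s' a'
def occ {S A : Type*} [Fintype S] [Fintype A]
    (P : S → A → S → ℝ) (pol : S → A → ℝ) (q : S → ℝ) (γ : ℝ) (s : S) (a : A) : ℝ :=
  ∑' n : ℕ, γ ^ n * stepDist P pol q n s a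

/-! Write state-action vectors as rows and let `M_π((s,a),(s',a')) = P(s'|s,a) π(a'|s')`.
Then `β^π = (1 - γ M_π)⁻¹` and `μ^π = ν_π (1 - γ M_π)⁻¹` with `ν_π(s,a) = q(s) π(a|s)`, the
Neumann series converging because `‖γ M_π‖ ≤ γ < 1` in the row-sum norm. Both `ν_π` and `M_π` are
linear in `π`, and the resolvent has derivative `R ↦ R (dM) R`, so `∇μ = (∇ν + γ μ ∇M) β`. By the
flow equation `μ(s') = q(s') + γ ∑_{s,a} μ(s,a) P(s'|s,a)`, the row vector `∇ν + γ μ ∇M` is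
exactly `(s',a') ↦ μ(s') ∇π(a'|s')`. -/

open Matrix

attribute [local instance] Matrix.linftyOpNormedRing Matrix.linftyOpNormedAlgebra

theorem HasFDerivAt.ringInverse_one_sub {𝕜 E R : Type*} [NontriviallyNormedField 𝕜]
    [NormedAddCommGroup E] [NormedSpace 𝕜 E] [NormedRing R] [HasSummableGeomSeries R]
    [NormedAlgebra 𝕜 R] {f : E → R} {f' : E →L[𝕜] R} {x : E}
    (hf : HasFDerivAt f f' x) (hx : IsUnit (1 - f x)) :
    HasFDerivAt (fun y => Ring.inverse (1 - f y))
      ((ContinuousLinearMap.mulLeftRight 𝕜 R (Ring.inverse (1 - f x))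
        (Ring.inverse (1 - f x))).comp f') x := by
  obtain ⟨u, hu⟩ := hx
  have hinv := hasFDerivAt_ringInverse (𝕜 := 𝕜) u
  rw [hu] at hinv
  rw [← hu, Ring.inverse_unit]
  have h := hinv.comp x (hf.const_sub 1)
  rw [ContinuousLinearMap.comp_neg, ContinuousLinearMap.neg_comp, neg_neg] at h
  exact h

section Matrix

variable {ι : Type*} [Fintype ι] [DecidableEq ι]

theorem Matrix.vecMul_ringInverse_one_sub {α : Type*} [Ring α] {N : Matrix ι ι α}
    (hN : IsUnit (1 - N)) (x : ι → α) :
    x ᵥ* Ring.inverse (1 - N) = x + (x ᵥ* Ring.inverse (1 - N)) ᵥ* N := by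
  have hR : Ring.inverse (1 - N) = 1 + Ring.inverse (1 - N) * N := by
    have := Ring.inverse_mul_cancel _ hN
    rwa [mul_sub, mul_one, sub_eq_iff_eq_add] at this
  conv_lhs => rw [hR]
  rw [vecMul_add, vecMul_one, vecMul_vecMul]

theorem Matrix.hasSum_pow_apply {N : Matrix ι ι ℝ} (hN : ‖N‖ < 1) (i j : ι) :
    HasSum (fun k => (N ^ k) i j) (Ring.inverse (1 - N) i j) :=
  Pi.hasSum.mp (Pi.hasSum.mp (hasSum_geom_series_inverse N hN) i) j

theorem Matrix.hasSum_vecMul_pow_apply {N : Matrix ι ι ℝ} (hN : ‖N‖ < 1) (x : ι → ℝ) (j : ι) :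
    HasSum (fun k => (x ᵥ* N ^ k) j) ((x ᵥ* Ring.inverse (1 - N)) j) :=
  hasSum_sum fun i _ => (hasSum_pow_apply hN i j).mul_left (x i)

theorem fderiv_vecMul_apply {E : Type*} [NormedAddCommGroup E] [NormedSpace ℝ E]
    {x : E → ι → ℝ} {x' : E →L[ℝ] ι → ℝ} {N : E → Matrix ι ι ℝ}
    {N' : E →L[ℝ] Matrix ι ι ℝ} {θ : E} (hx : HasFDerivAt x x' θ) (hN : HasFDerivAt N N' θ)
    (j : ι) (v : E) :
    fderiv ℝ (fun y => (x y ᵥ* N y) j) θ v = (x' v ᵥ* N θ + x θ ᵥ* N' v) j := by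
  have hentry : ∀ i, HasFDerivAt (fun y => x y i * N y i j)
      (x θ i • ((entryLinearMap ℝ ℝ i j).toContinuousLinearMap.comp N')
        + N θ i j • ((ContinuousLinearMap.proj i).comp x')) θ := fun i =>
    ((ContinuousLinearMap.proj i).hasFDerivAt.comp θ hx).mul
      ((entryLinearMap ℝ ℝ i j).toContinuousLinearMap.hasFDerivAt.comp θ hN)
  change fderiv ℝ (fun y => ∑ i, x y i * N y i j) θ v = _
  rw [(HasFDerivAt.fun_sum fun i _ => hentry i).fderiv]
  simp [vecMul, dotProduct, Finset.sum_add_distrib, mul_comm, add_comm]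

end Matrix

section MDP

variable {S A : Type*}

def transMat (P : S → A → S → ℝ) : (S → A → ℝ) →ₗ[ℝ] Matrix (S × A) (S × A) ℝ where
  toFun pol := of fun p p' => P p.1 p.2 p'.1 * pol p'.1 p'.2
  map_add' _ _ := by ext; simp [mul_add]
  map_smul' _ _ := by ext; simp [mul_left_comm]

def initDist (q : S → ℝ) : (S → A → ℝ) →ₗ[ℝ] S × A → ℝ where
  toFun pol p := q p.1 * pol p.1 p.2
  map_add' _ _ := by ext; simp [mul_add]
  map_smul' _ _ := by ext; simp [mul_left_comm]

@[simp]
theorem transMat_apply (P : S → A → S → ℝ) (pol : S → A → ℝ) (p p' : S × A) :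
    transMat P pol p p' = P p.1 p.2 p'.1 * pol p'.1 p'.2 := rfl

@[simp]
theorem initDist_apply (q : S → ℝ) (pol : S → A → ℝ) (p : S × A) :
    initDist q pol p = q p.1 * pol p.1 p.2 := rfl

variable [Fintype S] [Fintype A]

theorem vecMul_transMat_apply (P : S → A → S → ℝ) (x : S × A → ℝ) (pol : S → A → ℝ)
    (p' : S × A) :
    (x ᵥ* transMat P pol) p' = (∑ p, x p * P p.1 p.2 p'.1) * pol p'.1 p'.2 := by
  simp [vecMul, dotProduct, Finset.sum_mul, mul_assoc]

theorem initDist_add_vecMul_smul_transMat (P : S → A → S → ℝ) (q : S → ℝ) (γ : ℝ)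
    (x : S × A → ℝ) (w : S → A → ℝ) :
    initDist q w + x ᵥ* (γ • transMat P w) =
      fun p => (q p.1 + γ * ∑ p0, x p0 * P p0.1 p0.2 p.1) * w p.1 p.2 := by
  ext p
  simp only [Pi.add_apply, initDist_apply, vecMul_smul, Pi.smul_apply, vecMul_transMat_apply,
    smul_eq_mul]
  ring

variable [DecidableEq S] [DecidableEq A]

theorem stepDist_eq_vecMul_transMat_pow (P : S → A → S → ℝ) (pol : S → A → ℝ) (q : S → ℝ)
    (n : ℕ) (s : S) (a : A) :
    stepDist P pol q n s a = (initDist q pol ᵥ* transMat P pol ^ n) (s, a) := by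
  induction n generalizing s a with
  | zero => simp [stepDist]
  | succ n ih =>
    rw [pow_succ, ← vecMul_vecMul, vecMul_transMat_apply, stepDist, Fintype.sum_prod_type]
    simp only [ih]

theorem betaK_eq_transMat_pow (P : S → A → S → ℝ) (pol : S → A → ℝ) (k : ℕ)
    (s : S) (a : A) (s' : S) (a' : A) :
    betaK P pol k s a s' a' = (transMat P pol ^ k) (s, a) (s', a') := by
  induction k generalizing s a with
  | zero => simp [betaK, one_apply, Prod.ext_iff]
  | succ k ih =>
    rw [pow_succ', mul_apply, Fintype.sum_prod_type, betaK]
    simp only [ih, transMat_apply, mul_assoc]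

theorem norm_transMat_le_one {P : S → A → S → ℝ} {pol : S → A → ℝ}
    (hP : ∀ s a s', 0 ≤ P s a s') (hP1 : ∀ s a, ∑ s', P s a s' = 1)
    (hpol : ∀ s a, 0 ≤ pol s a) (hpol1 : ∀ s, ∑ a, pol s a = 1) :
    ‖transMat P pol‖ ≤ 1 := by
  rw [linfty_opNorm_def, NNReal.coe_le_one]
  refine Finset.sup_le fun p _ => ?_
  rw [← NNReal.coe_le_one, NNReal.coe_sum]
  refine le_of_eq ?_
  calc ∑ p', (‖transMat P pol p p'‖₊ : ℝ) = ∑ p' : S × A, P p.1 p.2 p'.1 * pol p'.1 p'.2 := by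
        refine Finset.sum_congr rfl fun p' _ => ?_
        rw [coe_nnnorm, transMat_apply, Real.norm_of_nonneg (mul_nonneg (hP ..) (hpol ..))]
    _ = 1 := by simp_rw [Fintype.sum_prod_type, ← Finset.mul_sum, hpol1, mul_one, hP1]

theorem norm_smul_transMat_lt_one {P : S → A → S → ℝ} {pol : S → A → ℝ} {γ : ℝ}
    (hP : ∀ s a s', 0 ≤ P s a s') (hP1 : ∀ s a, ∑ s', P s a s' = 1)
    (hpol : ∀ s a, 0 ≤ pol s a) (hpol1 : ∀ s, ∑ a, pol s a = 1)
    (hγ0 : 0 ≤ γ) (hγ1 : γ < 1) :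
    ‖γ • transMat P pol‖ < 1 :=
  calc ‖γ • transMat P pol‖ = γ * ‖transMat P pol‖ := by
        rw [norm_smul, Real.norm_of_nonneg hγ0]
    _ ≤ γ * 1 := by gcongr; exact norm_transMat_le_one hP hP1 hpol hpol1
    _ < 1 := by linarith

section Discounted

variable {P : S → A → S → ℝ} {pol : S → A → ℝ} {γ : ℝ} (h : ‖γ • transMat P pol‖ < 1)
include h

theorem betaDisc_eq_ringInverse (s : S) (a : A) (s' : S) (a' : A) :
    betaDisc P pol γ s a s' a' = Ring.inverse (1 - γ • transMat P pol) (s, a) (s', a') := by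
  rw [betaDisc, ← (hasSum_pow_apply h _ _).tsum_eq]
  refine tsum_congr fun k => ?_
  rw [smul_pow, Matrix.smul_apply, betaK_eq_transMat_pow, smul_eq_mul]

theorem occ_eq_vecMul_ringInverse (q : S → ℝ) (s : S) (a : A) :
    occ P pol q γ s a = (initDist q pol ᵥ* Ring.inverse (1 - γ • transMat P pol)) (s, a) := by
  rw [occ, ← (hasSum_vecMul_pow_apply h _ _).tsum_eq]
  refine tsum_congr fun n => ?_
  rw [smul_pow, vecMul_smul, Pi.smul_apply, stepDist_eq_vecMul_transMat_pow, smul_eq_mul]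

theorem sum_occ_bellman_flow (q : S → ℝ) (hpol1 : ∀ s, ∑ a, pol s a = 1) (s' : S) :
    ∑ b, occ P pol q γ s' b = q s' + γ * ∑ p : S × A, occ P pol q γ p.1 p.2 * P p.1 p.2 s' := by
  set ν := initDist q pol ᵥ* Ring.inverse (1 - γ • transMat P pol)
  have hocc : ∀ s b, occ P pol q γ s b = ν (s, b) := occ_eq_vecMul_ringInverse h q
  have hflow := vecMul_ringInverse_one_sub (isUnit_one_sub_of_norm_lt_one h) (initDist q pol)
  rw [initDist_add_vecMul_smul_transMat] at hflow
  simp only [hocc]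
  calc ∑ b, ν (s', b) = ∑ b, (q s' + γ * ∑ p, ν p * P p.1 p.2 s') * pol s' b :=
        Finset.sum_congr rfl fun b _ => congrFun hflow (s', b)
    _ = _ := by rw [← Finset.mul_sum, hpol1, mul_one]

theorem initDist_add_occ_vecMul_smul_transMat (q : S → ℝ) (hpol1 : ∀ s, ∑ a, pol s a = 1)
    (w : S → A → ℝ) :
    initDist q w + (fun p => occ P pol q γ p.1 p.2) ᵥ* (γ • transMat P w)
      = fun p => (∑ b, occ P pol q γ p.1 b) * w p.1 p.2 := by
  ext p
  rw [initDist_add_vecMul_smul_transMat, sum_occ_bellman_flow h q hpol1]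

end Discounted

theorem fderiv_occ_apply {E : Type*} [NormedAddCommGroup E] [NormedSpace ℝ E]
    {P : S → A → S → ℝ} {γ : ℝ} {pol : E → S → A → ℝ} {pol' : E →L[ℝ] S → A → ℝ} {θ : E}
    (hdpol : HasFDerivAt pol pol' θ) (hlt : ∀ θ', ‖γ • transMat P (pol θ')‖ < 1)
    (hpol1 : ∀ s, ∑ a, pol θ s a = 1) (q : S → ℝ) (s : S) (a : A) (v : E) :
    fderiv ℝ (fun θ' => occ P (pol θ') q γ s a) θ v =
      ((fun p => (∑ b, occ P (pol θ) q γ p.1 b) * pol' v p.1 p.2) ᵥ*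
        Ring.inverse (1 - γ • transMat P (pol θ))) (s, a) := by
  have hν : HasFDerivAt (fun θ' => initDist q (pol θ'))
      ((initDist q).toContinuousLinearMap.comp pol') θ :=
    (initDist q).toContinuousLinearMap.hasFDerivAt.comp θ hdpol
  have hM : HasFDerivAt (fun θ' => γ • transMat P (pol θ'))
      (γ • (transMat P).toContinuousLinearMap.comp pol') θ :=
    ((transMat P).toContinuousLinearMap.hasFDerivAt.comp θ hdpol).const_smul γ
  have hocc : (fun θ' => occ P (pol θ') q γ s a) = fun θ' =>
      (initDist q (pol θ') ᵥ* Ring.inverse (1 - γ • transMat P (pol θ'))) (s, a) :=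
    funext fun θ' => occ_eq_vecMul_ringInverse (hlt θ') q s a
  rw [hocc, fderiv_vecMul_apply hν (hM.ringInverse_one_sub (isUnit_one_sub_of_norm_lt_one (hlt θ)))]
  set R := Ring.inverse (1 - γ • transMat P (pol θ))
  have hμ : initDist q (pol θ) ᵥ* R = fun p => occ P (pol θ) q γ p.1 p.2 :=
    funext fun p => (occ_eq_vecMul_ringInverse (hlt θ) q p.1 p.2).symm
  change (initDist q (pol' v) ᵥ* R + initDist q (pol θ) ᵥ* (R * (γ • transMat P (pol' v)) * R))
    (s, a) = _
  rw [← vecMul_vecMul, ← vecMul_vecMul, hμ, ← add_vecMul,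
    initDist_add_occ_vecMul_smul_transMat (hlt θ) q hpol1]

end MDP

theorem occupancy_gradient_general {S A : Type*} [Fintype S] [Fintype A]
    [DecidableEq S] [DecidableEq A] {d : ℕ}
    (P : S → A → S → ℝ) (q : S → ℝ) (γ : ℝ)
    (pol : (Fin d → ℝ) → S → A → ℝ) (θ : Fin d → ℝ)
    (hP : ∀ s a s', 0 ≤ P s a s') (hP1 : ∀ s a, ∑ s', P s a s' = 1)
    (hpol : ∀ θ' s a, 0 ≤ pol θ' s a) (hpol1 : ∀ θ' s, ∑ a, pol θ' s a = 1)
    (hγ0 : 0 ≤ γ) (hγ1 : γ < 1)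
    (hdiff : ∀ s a, DifferentiableAt ℝ (fun θ' => pol θ' s a) θ) :
    ∀ s a,
      fderiv ℝ (fun θ' => occ P (pol θ') q γ s a) θ =
        ∑ s', ∑ a',
          ((∑ b, occ P (pol θ) q γ s' b) * betaDisc P (pol θ) γ s' a' s a) •
            fderiv ℝ (fun θ' => pol θ' s' a') θ := by
  intro s a
  have hdpol : HasFDerivAt pol
      (ContinuousLinearMap.pi fun s => ContinuousLinearMap.pi fun a =>
        fderiv ℝ (fun θ' => pol θ' s a) θ) θ :=
    hasFDerivAt_pi.2 fun s => hasFDerivAt_pi.2 fun a => (hdiff s a).hasFDerivAt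
  have hlt : ∀ θ', ‖γ • transMat P (pol θ')‖ < 1 := fun θ' =>
    norm_smul_transMat_lt_one hP hP1 (hpol θ') (hpol1 θ') hγ0 hγ1
  ext v
  rw [fderiv_occ_apply hdpol hlt (hpol1 θ)]
  simp only [_root_.sum_apply, _root_.smul_apply, smul_eq_mul, ContinuousLinearMap.pi_apply,
    betaDisc_eq_ringInverse (hlt θ)]
  rw [vecMul, dotProduct, Fintype.sum_prod_type]
  exact Finset.sum_congr rfl fun s' _ => Finset.sum_congr rfl fun a' _ => by ring

/-- Gradient of the occupancy measure with respect to the policy parameters: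
`∇_θ μ^{π_θ}(s,a) = ∑_{s',a'} μ^{π_θ}(s') β^{π_θ}(s',a',s,a) ∇_θ π_θ(a'|s')`. -/
theorem occupancy_gradient {S A : Type*} [Fintype S] [Fintype A]
    [DecidableEq S] [DecidableEq A] {d : ℕ}
    (P : S → A → S → ℝ) (q : S → ℝ) (γ : ℝ)
    (pol : (Fin d → ℝ) → S → A → ℝ) (θ : Fin d → ℝ)
    (hP : ∀ s a s', 0 ≤ P s a s') (hP1 : ∀ s a, ∑ s', P s a s' = 1)
    (hpol : ∀ θ' s a, 0 ≤ pol θ' s a) (hpol1 : ∀ θ' s, ∑ a, pol θ' s a = 1)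
    (hq : ∀ s, 0 ≤ q s) (hq1 : ∑ s, q s = 1)
    (hγ0 : 0 ≤ γ) (hγ1 : γ < 1)
    (hdiff : ∀ s a, DifferentiableAt ℝ (fun θ' => pol θ' s a) θ) :
    ∀ s a,
      fderiv ℝ (fun θ' => occ P (pol θ') q γ s a) θ =
        ∑ s', ∑ a',
          ((∑ b, occ P (pol θ) q γ s' b) * betaDisc P (pol θ) γ s' a' s a) •
            fderiv ℝ (fun θ' => pol θ' s' a') θ :=
  occupancy_gradient_general P q γ pol θ hP hP1 hpol hpol1 hγ0 hγ1 hdiff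
end
end

section
/- (Policy Gradient Theorem for general utilities) Let f : ℝ^{S×A} → ℝ be differentiable and define the 'intrinsic reward' R_π = ∇f evaluated at μ^π. Then for a differentiably parameterized policy π_θ, the gradient of θ ↦ f(μ^{π_θ}) equals Σ_{s,a} μ^{π_θ}(s) Q^{π_θ}_{R_{π_θ}}(s,a) ∇_θ π_θ(a|s). -/
open scoped BigOperators

noncomputable section

/-!
Over state–action pairs, write `M_π((s,a),(s',a')) = P(s'|s,a) π(a'|s')` and
`ν_π(s,a) = q(s) π(a|s)`; both are linear in `π`. For a stochastic `π` and `0 ≤ γ < 1` the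
matrix `γ M_π` has ℓ∞-operator norm `< 1`, so the Neumann series give `μ^π = ν_π (1 - γ M_π)⁻¹`
and `Q^π_R = (1 - γ M_π)⁻¹ R`. The right-hand side of the first formula makes sense for every
policy matrix, and differentiating it yields `dμ = (dν + γ μ dM) (1 - γ M_π)⁻¹`. The flow equation
`μ = ν + γ μ M_π`, summed over actions, identifies `(dν + γ μ dM)(s,a)` with `μ(s) dπ(a|s)`.
Finally `∇f · (w (1 - γ M_π)⁻¹) = w · ((1 - γ M_π)⁻¹ ∇f) = w · Q_{∇f}`.
-/

open Matrix
open scoped Ring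

attribute [local instance] Matrix.linftyOpNormedRing Matrix.linftyOpNormedAlgebra

namespace Matrix

section Summation

variable {ι m n α : Type*} [NonUnitalNonAssocSemiring α] [TopologicalSpace α]
  [IsTopologicalSemiring α] {F : ι → Matrix m n α} {B : Matrix m n α}

theorem hasSum_vecMul [Fintype m] (h : HasSum F B) (v : m → α) :
    HasSum (fun i => v ᵥ* F i) (v ᵥ* B) :=
  Pi.hasSum.2 fun x => hasSum_sum fun y _ => (Pi.hasSum.1 (Pi.hasSum.1 h y) x).mul_left (v y)

theorem hasSum_mulVec [Fintype n] (h : HasSum F B) (v : n → α) :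
    HasSum (fun i => F i *ᵥ v) (B *ᵥ v) :=
  Pi.hasSum.2 fun x => hasSum_sum fun y _ => (Pi.hasSum.1 (Pi.hasSum.1 h x) y).mul_right (v y)

end Summation

theorem linfty_opNorm_le_one_of_mem_rowStochastic {n : Type*} [Fintype n] [DecidableEq n]
    {M : Matrix n n ℝ} (hM : M ∈ rowStochastic ℝ n) : ‖M‖ ≤ 1 := by
  rw [linfty_opNorm_def, NNReal.coe_le_one, Finset.sup_le_iff]
  intro i _
  rw [← NNReal.coe_le_one, NNReal.coe_sum]
  simp_rw [coe_nnnorm, Real.norm_of_nonneg (nonneg_of_mem_rowStochastic hM)]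
  exact (sum_row_of_mem_rowStochastic hM i).le

section Derivative

variable {𝕜 : Type*} [RCLike 𝕜] {n : Type*} [Fintype n]

variable (𝕜 n) in
def vecMulL : (n → 𝕜) →L[𝕜] Matrix n n 𝕜 →L[𝕜] n → 𝕜 :=
  LinearMap.toContinuousBilinearMap <|
    LinearMap.mk₂ 𝕜 vecMul (fun v w M => add_vecMul M v w) (fun c v M => smul_vecMul c v M)
      (fun v M N => vecMul_add M N v) (fun c v M => vecMul_smul v c M)

@[simp]
theorem vecMulL_apply (v : n → 𝕜) (M : Matrix n n 𝕜) : vecMulL 𝕜 n v M = v ᵥ* M := rfl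

variable [DecidableEq n] {E : Type*} [NormedAddCommGroup E] [NormedSpace 𝕜 E]

theorem hasFDerivAt_vecMul_ringInverse {v : E → n → 𝕜} {M : E → Matrix n n 𝕜}
    {v' : E →L[𝕜] n → 𝕜} {M' : E →L[𝕜] Matrix n n 𝕜} {x : E}
    (hv : HasFDerivAt v v' x) (hM : HasFDerivAt M M' x) (hMx : IsUnit (M x)) :
    HasFDerivAt (fun y => v y ᵥ* (M y)⁻¹ʳ)
      ((vecMulL 𝕜 n).flip (M x)⁻¹ʳ ∘L (v' - vecMulL 𝕜 n (v x ᵥ* (M x)⁻¹ʳ) ∘L M')) x := by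
  obtain ⟨u, hu⟩ := hMx
  have hinv := (hu ▸ hasFDerivAt_ringInverse (𝕜 := 𝕜) u).comp x hM
  rw [← Ring.inverse_unit, hu] at hinv
  refine ((vecMulL 𝕜 n).hasFDerivAt_of_bilinear hv hinv).congr_fderiv ?_
  ext1 h
  change v x ᵥ* -((M x)⁻¹ʳ * M' h * (M x)⁻¹ʳ) + v' h ᵥ* (M x)⁻¹ʳ
    = (v' h - v x ᵥ* (M x)⁻¹ʳ ᵥ* M' h) ᵥ* (M x)⁻¹ʳ
  rw [sub_vecMul, vecMul_neg, vecMul_vecMul, vecMul_vecMul, mul_assoc]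
  abel

end Derivative

end Matrix

theorem ContinuousLinearMap.apply_eq_dotProduct {𝕜 n : Type*} [RCLike 𝕜] [Fintype n]
    [DecidableEq n] (φ : (n → 𝕜) →L[𝕜] 𝕜) (u : n → 𝕜) :
    φ u = u ⬝ᵥ fun i => φ (Pi.single i 1) := by
  conv_lhs => rw [pi_eq_sum_univ' u]
  simp [map_sum, dotProduct]

section MDP

variable {S A : Type*}

def transitionMatrix (P : S → A → S → ℝ) : (S → A → ℝ) →ₗ[ℝ] Matrix (S × A) (S × A) ℝ where
  toFun p := Matrix.of fun x y => P x.1 x.2 y.1 * p y.1 y.2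
  map_add' p p' := by ext; simp [mul_add]
  map_smul' c p := by ext; simp [mul_left_comm]

@[simp]
theorem transitionMatrix_apply (P : S → A → S → ℝ) (p : S → A → ℝ) (x y : S × A) :
    transitionMatrix P p x y = P x.1 x.2 y.1 * p y.1 y.2 := rfl

def initialDistribution (q : S → ℝ) : (S → A → ℝ) →ₗ[ℝ] S × A → ℝ where
  toFun p x := q x.1 * p x.1 x.2
  map_add' p p' := by ext; simp [mul_add]
  map_smul' c p := by ext; simp [mul_left_comm]

@[simp]
theorem initialDistribution_apply (q : S → ℝ) (p : S → A → ℝ) (x : S × A) :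
    initialDistribution q p x = q x.1 * p x.1 x.2 := rfl

variable [Fintype S] [Fintype A] [DecidableEq S] [DecidableEq A]
  {P : S → A → S → ℝ} {p : S → A → ℝ} {q : S → ℝ} {γ : ℝ}

theorem transitionMatrix_mem_rowStochastic (hP : ∀ s a s', 0 ≤ P s a s')
    (hP1 : ∀ s a, ∑ s', P s a s' = 1) (hp : ∀ s a, 0 ≤ p s a) (hp1 : ∀ s, ∑ a, p s a = 1) :
    transitionMatrix P p ∈ rowStochastic ℝ (S × A) := by
  refine mem_rowStochastic_iff_sum.2 ⟨fun x y => mul_nonneg (hP _ _ _) (hp _ _), fun x => ?_⟩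
  simp [Fintype.sum_prod_type, ← Finset.mul_sum, hp1, hP1]

theorem norm_smul_transitionMatrix_lt_one (hP : ∀ s a s', 0 ≤ P s a s')
    (hP1 : ∀ s a, ∑ s', P s a s' = 1) (hp : ∀ s a, 0 ≤ p s a) (hp1 : ∀ s, ∑ a, p s a = 1)
    (hγ0 : 0 ≤ γ) (hγ1 : γ < 1) : ‖γ • transitionMatrix P p‖ < 1 := by
  rw [norm_smul, Real.norm_of_nonneg hγ0]
  calc γ * ‖transitionMatrix P p‖
      ≤ γ * 1 := by
        gcongr
        exact linfty_opNorm_le_one_of_mem_rowStochastic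
          (transitionMatrix_mem_rowStochastic hP hP1 hp hp1)
    _ < 1 := by linarith

theorem betaK_eq_pow_apply (k : ℕ) (s : S) (a : A) (s' : S) (a' : A) :
    betaK P p k s a s' a' = (transitionMatrix P p ^ k) (s, a) (s', a') := by
  induction k generalizing s a with
  | zero => simp [betaK, Matrix.one_apply, Prod.ext_iff]
  | succ k ih =>
    simp only [betaK, pow_succ', Matrix.mul_apply, Fintype.sum_prod_type, ← ih,
      transitionMatrix_apply]

theorem stepDist_eq_vecMul_pow (n : ℕ) :
    (fun x : S × A => stepDist P p q n x.1 x.2)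
      = initialDistribution q p ᵥ* transitionMatrix P p ^ n := by
  induction n with
  | zero => ext x; simp [stepDist]
  | succ n ih =>
    rw [pow_succ, ← vecMul_vecMul, ← ih]
    ext y
    simp [stepDist, vecMul, dotProduct, Fintype.sum_prod_type, Finset.sum_mul, mul_assoc]

theorem hasSum_discounted_pow_transitionMatrix (hγ : ‖γ • transitionMatrix P p‖ < 1) :
    HasSum (fun n => γ ^ n • transitionMatrix P p ^ n) (1 - γ • transitionMatrix P p)⁻¹ʳ := by
  have h := hasSum_geom_series_inverse _ hγ
  simp only [smul_pow] at h
  exact h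

theorem occ_eq_vecMul_inverse (hγ : ‖γ • transitionMatrix P p‖ < 1) :
    (fun x : S × A => occ P p q γ x.1 x.2)
      = initialDistribution q p ᵥ* (1 - γ • transitionMatrix P p)⁻¹ʳ := by
  ext x
  refine (Pi.hasSum.1 (hasSum_vecMul (hasSum_discounted_pow_transitionMatrix hγ)
    (initialDistribution q p)) x).tsum_eq.symm.trans (tsum_congr fun n => ?_) |>.symm
  simp [vecMul_smul, ← stepDist_eq_vecMul_pow]

theorem Qval_eq_mulVec_inverse (hγ : ‖γ • transitionMatrix P p‖ < 1) (R : S → A → ℝ)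
    (s : S) (a : A) :
    Qval P p γ R s a = ((1 - γ • transitionMatrix P p)⁻¹ʳ *ᵥ fun y => R y.1 y.2) (s, a) := by
  refine (Pi.hasSum.1 (hasSum_mulVec (hasSum_discounted_pow_transitionMatrix hγ) _)
    (s, a)).tsum_eq.symm.trans (tsum_congr fun n => ?_) |>.symm
  simp [mulVec, dotProduct, Fintype.sum_prod_type, betaK_eq_pow_apply, Finset.mul_sum, mul_assoc]

theorem occ_eq_add_vecMul (hγ : ‖γ • transitionMatrix P p‖ < 1) :
    (fun x : S × A => occ P p q γ x.1 x.2) = initialDistribution q p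
      + γ • ((fun x : S × A => occ P p q γ x.1 x.2) ᵥ* transitionMatrix P p) := by
  have h : (fun x : S × A => occ P p q γ x.1 x.2) ᵥ* (1 - γ • transitionMatrix P p)
      = initialDistribution q p := by
    rw [occ_eq_vecMul_inverse hγ, vecMul_vecMul,
      Ring.inverse_mul_cancel _ (isUnit_one_sub_of_norm_lt_one hγ), vecMul_one]
  rw [vecMul_sub, vecMul_one, vecMul_smul] at h
  rw [← h, sub_add_cancel]

theorem sum_occ_eq (hγ : ‖γ • transitionMatrix P p‖ < 1) (hp1 : ∀ s, ∑ a, p s a = 1) (s : S) :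
    ∑ a, occ P p q γ s a = q s + γ * ∑ z : S × A, occ P p q γ z.1 z.2 * P z.1 z.2 s := by
  have h a := congrFun (occ_eq_add_vecMul (q := q) hγ) (s, a)
  simp only [Pi.add_apply, Pi.smul_apply, initialDistribution_apply, vecMul, dotProduct,
    transitionMatrix_apply, smul_eq_mul] at h
  simp_rw [h, Finset.sum_add_distrib, ← mul_assoc, ← Finset.sum_mul, ← Finset.mul_sum, hp1,
    mul_one]

/-- Unlike the series `occ`, this closed form is differentiable in the policy matrix `p` on the
open set where `1 - γ M_p` is invertible, as the chain rule requires. -/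
def occClosedForm (P : S → A → S → ℝ) (q : S → ℝ) (γ : ℝ) (p : S → A → ℝ) : S × A → ℝ :=
  initialDistribution q p ᵥ* (1 - γ • transitionMatrix P p)⁻¹ʳ

theorem exists_hasFDerivAt_occClosedForm (hγ : ‖γ • transitionMatrix P p‖ < 1)
    (hp1 : ∀ s, ∑ a, p s a = 1) :
    ∃ L : (S → A → ℝ) →L[ℝ] S × A → ℝ, HasFDerivAt (occClosedForm P q γ) L p ∧
      ∀ h, L h = (fun y => (∑ a, occ P p q γ y.1 a) * h y.1 y.2)
        ᵥ* (1 - γ • transitionMatrix P p)⁻¹ʳ := by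
  have hM : HasFDerivAt (fun p' => 1 - γ • transitionMatrix P p')
      (-(γ • (transitionMatrix P).toContinuousLinearMap)) p :=
    ((transitionMatrix P).toContinuousLinearMap.hasFDerivAt.const_smul γ).const_sub 1
  refine ⟨_, hasFDerivAt_vecMul_ringInverse
    (initialDistribution q).toContinuousLinearMap.hasFDerivAt hM
    (isUnit_one_sub_of_norm_lt_one hγ), fun h => ?_⟩
  change (initialDistribution q h - (initialDistribution q p ᵥ* (1 - γ • transitionMatrix P p)⁻¹ʳ)
      ᵥ* -(γ • transitionMatrix P h)) ᵥ* (1 - γ • transitionMatrix P p)⁻¹ʳ = _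
  rw [← occ_eq_vecMul_inverse hγ]
  congr 1
  ext y
  simp only [Pi.sub_apply, initialDistribution_apply, vecMul, dotProduct, Matrix.neg_apply,
    Matrix.smul_apply, transitionMatrix_apply, smul_eq_mul, mul_neg, Finset.sum_neg_distrib,
    sub_neg_eq_add, sum_occ_eq hγ hp1]
  rw [add_mul, mul_assoc, Finset.sum_mul, Finset.mul_sum]
  congr 1
  exact Finset.sum_congr rfl fun z _ => by ring

end MDP

theorem policy_gradient_general_utilities_general {S A : Type*} [Fintype S] [Fintype A]
    [DecidableEq S] [DecidableEq A] {d : ℕ}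
    (P : S → A → S → ℝ) (q : S → ℝ) (γ : ℝ)
    (pol : (Fin d → ℝ) → S → A → ℝ) (θ : Fin d → ℝ)
    (f : (S × A → ℝ) → ℝ)
    (hP : ∀ s a s', 0 ≤ P s a s') (hP1 : ∀ s a, ∑ s', P s a s' = 1)
    (hpol : ∀ θ' s a, 0 ≤ pol θ' s a) (hpol1 : ∀ θ' s, ∑ a, pol θ' s a = 1)
    (hγ0 : 0 ≤ γ) (hγ1 : γ < 1)
    (hdiff : ∀ s a, DifferentiableAt ℝ (fun θ' => pol θ' s a) θ)
    (hf : DifferentiableAt ℝ f (fun p : S × A => occ P (pol θ) q γ p.1 p.2)) :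
    fderiv ℝ (fun θ' => f (fun p : S × A => occ P (pol θ') q γ p.1 p.2)) θ =
      ∑ s, ∑ a,
        ((∑ b, occ P (pol θ) q γ s b) *
            Qval P (pol θ) γ
              (fun s' a' =>
                fderiv ℝ f (fun p : S × A => occ P (pol θ) q γ p.1 p.2)
                  (Pi.single (s', a') 1)) s a) •
          fderiv ℝ (fun θ' => pol θ' s a) θ := by
  have hγ θ' := norm_smul_transitionMatrix_lt_one hP hP1 (hpol θ') (hpol1 θ') hγ0 hγ1
  have hocc θ' : (fun x : S × A => occ P (pol θ') q γ x.1 x.2) = occClosedForm P q γ (pol θ') :=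
    occ_eq_vecMul_inverse (hγ θ')
  obtain ⟨L, hL, hL_apply⟩ := exists_hasFDerivAt_occClosedForm (q := q) (hγ θ) (hpol1 θ)
  have hpolθ : HasFDerivAt (fun θ' => pol θ')
      (ContinuousLinearMap.pi fun s => ContinuousLinearMap.pi fun a =>
        fderiv ℝ (fun θ' => pol θ' s a) θ) θ :=
    hasFDerivAt_pi.2 fun s => hasFDerivAt_pi.2 fun a => (hdiff s a).hasFDerivAt
  simp_rw [hocc] at hf ⊢
  have hchain : HasFDerivAt (fun θ' => f (occClosedForm P q γ (pol θ'))) _ θ :=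
    hf.hasFDerivAt.comp θ (hL.comp θ hpolθ)
  rw [hchain.fderiv]
  ext1 v
  rw [ContinuousLinearMap.comp_apply, ContinuousLinearMap.comp_apply, hL_apply,
    ContinuousLinearMap.apply_eq_dotProduct, ← dotProduct_mulVec]
  simp only [dotProduct, ContinuousLinearMap.coe_pi', Fintype.sum_prod_type,
    Qval_eq_mulVec_inverse (hγ θ), Prod.mk.eta, _root_.sum_apply, _root_.smul_apply, smul_eq_mul]
  exact Finset.sum_congr rfl fun s _ => Finset.sum_congr rfl fun a _ => mul_right_comm _ _ _

/-- Policy Gradient Theorem for RL with general utilities: with the intrinsic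
reward `R_π = ∇f(μ^π)`, the gradient of `θ ↦ f(μ^{π_θ})` is
`∑_{s,a} μ^{π_θ}(s) Q^{π_θ}_{R_π}(s,a) ∇_θ π_θ(a|s)`. -/
theorem policy_gradient_general_utilities {S A : Type*} [Fintype S] [Fintype A]
    [DecidableEq S] [DecidableEq A] {d : ℕ}
    (P : S → A → S → ℝ) (q : S → ℝ) (γ : ℝ)
    (pol : (Fin d → ℝ) → S → A → ℝ) (θ : Fin d → ℝ)
    (f : (S × A → ℝ) → ℝ)
    (hP : ∀ s a s', 0 ≤ P s a s') (hP1 : ∀ s a, ∑ s', P s a s' = 1)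
    (hpol : ∀ θ' s a, 0 ≤ pol θ' s a) (hpol1 : ∀ θ' s, ∑ a, pol θ' s a = 1)
    (hq : ∀ s, 0 ≤ q s) (hq1 : ∑ s, q s = 1)
    (hγ0 : 0 ≤ γ) (hγ1 : γ < 1)
    (hdiff : ∀ s a, DifferentiableAt ℝ (fun θ' => pol θ' s a) θ)
    (hf : DifferentiableAt ℝ f (fun p : S × A => occ P (pol θ) q γ p.1 p.2)) :
    fderiv ℝ (fun θ' => f (fun p : S × A => occ P (pol θ') q γ p.1 p.2)) θ =
      ∑ s, ∑ a,
        ((∑ b, occ P (pol θ) q γ s b) *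
            Qval P (pol θ) γ
              (fun s' a' =>
                fderiv ℝ f (fun p : S × A => occ P (pol θ) q γ p.1 p.2)
                  (Pi.single (s', a') 1)) s a) •
          fderiv ℝ (fun θ' => pol θ' s a) θ :=
  policy_gradient_general_utilities_general P q γ pol θ f hP hP1 hpol hpol1 hγ0 hγ1 hdiff hf
end
end

section
/- (Policy gradient with compatible function approximation) Suppose g_w : S × A → ℝ satisfies (i) Σ_{s,a} μ^π(s) π(a|s) [Q^π(s,a) − g_w(s,a)] ∂g_w(s,a)/∂w = 0 and (ii) ∂g_w(s,a)/∂w = ∇_θ π(a|s) / π(a|s). Then the policy gradient ∇_θ f = Σ_{s,a} μ^π(s) Q^π(s,a) ∇_θ π(a|s) equals Σ_{s,a} μ^π(s) ∇_θ π(a|s) g_w(s,a). -/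
theorem mul_mul_sub_smul_inv_smul {𝕜 M : Type*} [Field 𝕜] [AddCommGroup M] [Module 𝕜 M]
    (c p q r : 𝕜) (v : M) (hp : p ≠ 0) :
    (c * p * (q - r)) • p⁻¹ • v = (c * q) • v - (c * r) • v := by
  rw [smul_smul, ← sub_smul]
  congr 1
  field_simp

/-- Policy gradient with compatible function approximation: if the approximator
`g_w` satisfies the local-convergence condition and the compatibility condition
`∂g_w/∂w = ∇_θ π(a|s) / π(a|s)`, then replacing `Q^π` by `g_w` in the policy
gradient leaves it unchanged. -/
theorem policy_gradient_function_approximation {S A : Type*} [Fintype S] [Fintype A]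
    {d : ℕ}
    (μs : S → ℝ) (Q : S → A → ℝ)
    (pol : (Fin d → ℝ) → S → A → ℝ) (θ : Fin d → ℝ)
    (g : (Fin d → ℝ) → S → A → ℝ) (w : Fin d → ℝ)
    (hpolpos : ∀ s a, 0 < pol θ s a)
    (hcompat : ∀ s a,
      fderiv ℝ (fun w' => g w' s a) w =
        (pol θ s a)⁻¹ • fderiv ℝ (fun θ' => pol θ' s a) θ)
    (hlocal : ∑ s, ∑ a,
        (μs s * pol θ s a * (Q s a - g w s a)) • fderiv ℝ (fun w' => g w' s a) w = 0) :
    ∑ s, ∑ a, (μs s * Q s a) • fderiv ℝ (fun θ' => pol θ' s a) θ =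
      ∑ s, ∑ a, (μs s * g w s a) • fderiv ℝ (fun θ' => pol θ' s a) θ := by
  have hterm : ∀ s a,
      (μs s * pol θ s a * (Q s a - g w s a)) • fderiv ℝ (fun w' => g w' s a) w =
        (μs s * Q s a) • fderiv ℝ (fun θ' => pol θ' s a) θ -
          (μs s * g w s a) • fderiv ℝ (fun θ' => pol θ' s a) θ := fun s a => by
    rw [hcompat]
    exact mul_mul_sub_smul_inv_smul _ _ _ _ (fderiv ℝ (fun θ' => pol θ' s a) θ) (hpolpos s a).ne'
  simpa only [hterm, Finset.sum_sub_distrib, sub_eq_zero] using hlocal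
end
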